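/- arXiv:1512.01008 — 6 statements merged into one kernel-verified Lean document; each statement's English description precedes it below -/
import Mathlib

section
/- For all n \ge 0, the numbers S_n satisfy the four-term recurrence 9(n+1)^2 S_n - (19n^2+74n+87)S_{n+1} + (n+3)(11n+29)S_{n+2} - (n+3)^2 S_{n+3} = 0. -/
/-!
Creative telescoping: the certificate found by Zeilberger's algorithm satisfies
`((n+1)(n+2)(n+3))² · (L summand n) k = certificate n (k+1) - certificate n k`, where `L` is the
recurrence operator. Every hypergeometric term involved is a rational multiple of
`C(n+3,k)² C(2k,k)` with denominators depending only on `n`, so the identity reduces to a polynomial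
one. Summing over `k < n + 4` telescopes to `certificate n (n+4) - certificate n 0 = 0`.
-/

def S (n : ℕ) : ℕ :=
  ∑ k ∈ Finset.range (n + 1),
    (Nat.choose n k) ^ 2 * (Nat.choose (2 * k) k) * (2 * k + 1)

open Finset

namespace Nat

theorem cast_choose_mul_succ {R : Type*} [CommRing R] (m k : ℕ) :
    (m.choose k : R) * (m + 1) = ((m + 1).choose k : R) * (m + 1 - k) := by
  rcases le_or_gt k (m + 1) with hk | hk
  · have h := congrArg (Nat.cast : ℕ → R) (choose_mul_succ_eq m k)
    push_cast [Nat.cast_sub hk] at h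
    exact h
  · simp [choose_eq_zero_of_lt hk, choose_eq_zero_of_lt (show m < k by omega)]

theorem cast_choose_succ_right_mul {R : Type*} [CommRing R] (m k : ℕ) :
    (m.choose (k + 1) : R) * (k + 1) = (m.choose k : R) * (m - k) := by
  rcases le_or_gt k m with hk | hk
  · have h := congrArg (Nat.cast : ℕ → R) (choose_succ_right_eq m k)
    push_cast [Nat.cast_sub hk] at h
    exact h
  · simp [choose_eq_zero_of_lt hk, choose_eq_zero_of_lt (show m < k + 1 by omega)]

theorem cast_choose_mul_prod {R : Type*} [CommRing R] (n k j : ℕ) :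
    (n.choose k : R) * ∏ i ∈ range j, ((n : R) + i + 1)
      = ((n + j).choose k : R) * ∏ i ∈ range j, ((n : R) + i + 1 - k) := by
  induction j with
  | zero => simp
  | succ j ih =>
    have h := cast_choose_mul_succ (R := R) (n + j) k
    push_cast at h
    rw [prod_range_succ, prod_range_succ, ← mul_assoc, ih, ← add_assoc]
    linear_combination (∏ i ∈ range j, ((n : R) + i + 1 - k)) * h

end Nat

def summand (n k : ℕ) : ℕ := n.choose k ^ 2 * k.centralBinom * (2 * k + 1)

theorem S_eq_sum_summand {n N : ℕ} (h : n < N) : S n = ∑ k ∈ range N, summand n k := by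
  refine sum_subset (range_subset_range.mpr h) fun k _ hkn => ?_
  rw [mem_range, not_lt] at hkn
  simp [Nat.choose_eq_zero_of_lt (show n < k by omega)]

theorem summand_mul_prod_sq (n k j : ℕ) :
    (summand n k : ℤ) * (∏ i ∈ range j, ((n : ℤ) + i + 1)) ^ 2
      = summand (n + j) k * (∏ i ∈ range j, ((n : ℤ) + i + 1 - k)) ^ 2 := by
  have h := Nat.cast_choose_mul_prod (R := ℤ) n k j
  simp only [summand]
  push_cast
  linear_combination (k.centralBinom * (2 * k + 1) * ((n.choose k : ℤ) * ∏ i ∈ range j,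
    ((n : ℤ) + i + 1) + ((n + j).choose k : ℤ) * ∏ i ∈ range j, ((n : ℤ) + i + 1 - k))) * h

def certificatePoly (n k : ℤ) : ℤ :=
  (-60 - 164*n - 156*n^2 - 60*n^3 - 8*n^4)
  + (-33 - 100*n - 109*n^2 - 50*n^3 - 8*n^4)*k
  + (144 + 386*n + 356*n^2 + 130*n^3 + 16*n^4)*k^2
  + (-57 - 134*n - 97*n^2 - 20*n^3)*k^3
  + (6 + 12*n + 6*n^2)*k^4

def certificate (n k : ℕ) : ℤ :=
  ((n + 3).choose k : ℤ) ^ 2 * k.centralBinom * (k : ℤ) ^ 3 * certificatePoly n k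

theorem certificate_succ (n k : ℕ) :
    certificate n (k + 1) = 2 * ((n + 3).choose k : ℤ) ^ 2 * k.centralBinom * (2 * k + 1)
      * ((n : ℤ) + 3 - k) ^ 2 * certificatePoly n (k + 1) := by
  have hC := Nat.cast_choose_succ_right_mul (R := ℤ) (n + 3) k
  have hB : ((k + 1).centralBinom : ℤ) * (k + 1) = 2 * (2 * k + 1) * k.centralBinom := by
    exact_mod_cast (mul_comm _ _).trans (Nat.succ_mul_centralBinom_succ k)
  push_cast at hC ⊢
  rw [certificate]
  push_cast
  linear_combination (((n + 3).choose (k + 1) : ℤ) * (k + 1) + ((n + 3).choose k : ℤ) * (n + 3 - k))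
      * ((k + 1).centralBinom : ℤ) * (k + 1) * certificatePoly n (k + 1) * hC
    + ((n + 3).choose k : ℤ) ^ 2 * ((n : ℤ) + 3 - k) ^ 2 * certificatePoly n (k + 1) * hB

theorem certificate_zero (n : ℕ) : certificate n 0 = 0 := by
  simp [certificate]

theorem certificate_eq_zero_of_lt {n k : ℕ} (h : n + 3 < k) : certificate n k = 0 := by
  simp [certificate, Nat.choose_eq_zero_of_lt h]

theorem recurrence_summand_eq_certificate_sub (n k : ℕ) :
    (((n : ℤ) + 1) * (n + 2) * (n + 3)) ^ 2 *
      (9 * ((n : ℤ) + 1) ^ 2 * summand n k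
        - (19 * (n : ℤ) ^ 2 + 74 * n + 87) * summand (n + 1) k
        + ((n : ℤ) + 3) * (11 * n + 29) * summand (n + 2) k
        - ((n : ℤ) + 3) ^ 2 * summand (n + 3) k)
      = certificate n (k + 1) - certificate n k := by
  have h0 := summand_mul_prod_sq n k 3
  have h1 := summand_mul_prod_sq (n + 1) k 2
  have h2 := summand_mul_prod_sq (n + 2) k 1
  simp only [prod_range_succ, prod_range_zero] at h0 h1 h2
  rw [certificate_succ, certificate]
  simp only [summand] at h0 h1 h2 ⊢
  push_cast at h0 h1 h2 ⊢
  simp only [certificatePoly]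
  linear_combination 9 * ((n : ℤ) + 1) ^ 2 * h0
    - (19 * (n : ℤ) ^ 2 + 74 * n + 87) * ((n : ℤ) + 1) ^ 2 * h1
    + ((n : ℤ) + 3) * (11 * n + 29) * ((n : ℤ) + 1) ^ 2 * ((n : ℤ) + 2) ^ 2 * h2

theorem stmt_2 : ∀ n : ℕ,
    9 * ((n : ℤ) + 1) ^ 2 * (S n : ℤ)
      - (19 * (n : ℤ) ^ 2 + 74 * (n : ℤ) + 87) * (S (n + 1) : ℤ)
      + ((n : ℤ) + 3) * (11 * (n : ℤ) + 29) * (S (n + 2) : ℤ)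
      - ((n : ℤ) + 3) ^ 2 * (S (n + 3) : ℤ) = 0 := by
  intro n
  have hsum := sum_congr rfl fun k (_ : k ∈ range (n + 4)) =>
    recurrence_summand_eq_certificate_sub n k
  rw [sum_range_sub (certificate n), certificate_zero,
    certificate_eq_zero_of_lt (by omega), sub_zero, ← mul_sum] at hsum
  simp only [sum_sub_distrib, sum_add_distrib, ← mul_sum] at hsum
  rw [S_eq_sum_summand (N := n + 4) (by omega), S_eq_sum_summand (N := n + 4) (by omega),
    S_eq_sum_summand (N := n + 4) (by omega), S_eq_sum_summand (N := n + 4) (by omega)]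
  push_cast
  have hc : (((n : ℤ) + 1) * (n + 2) * (n + 3)) ^ 2 ≠ 0 := by positivity
  exact (mul_eq_zero.mp hsum).resolve_left hc
end

section
/- For every integer n \ge 1, R_n > 0, where R_n = \sum_{k=0}^n \binom{n}{k}\binom{n+k}{k}\frac{1}{2k-1}. -/
noncomputable def R (n : ℕ) : ℚ :=
  ∑ k ∈ Finset.range (n + 1),
    (Nat.choose n k : ℚ) * (Nat.choose (n + k) k : ℚ) * (1 / (2 * (k : ℚ) - 1))

/-! Only the `k = 0` summand of `R n` is negative, and it equals `-1`; the `k = 1` summand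
`n (n + 1)` already outweighs it. -/

namespace R

noncomputable def summand (n k : ℕ) : ℚ :=
  (Nat.choose n k : ℚ) * (Nat.choose (n + k) k : ℚ) * (1 / (2 * (k : ℚ) - 1))

theorem eq_sum_summand (n : ℕ) : R n = ∑ k ∈ Finset.range (n + 1), summand n k := rfl

@[simp]
theorem summand_zero (n : ℕ) : summand n 0 = -1 := by
  norm_num [summand]

@[simp]
theorem summand_one (n : ℕ) : summand n 1 = n * (n + 1) := by
  simp only [summand, Nat.choose_one_right, Nat.cast_add, Nat.cast_one]
  norm_num

theorem summand_nonneg (n : ℕ) {k : ℕ} (hk : 1 ≤ k) : 0 ≤ summand n k := by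
  have h2k : (0 : ℚ) < 2 * k - 1 := by
    have : (1 : ℚ) ≤ k := by exact_mod_cast hk
    linarith
  unfold summand
  positivity

theorem summand_one_le_sum_succ (n : ℕ) (hn : 1 ≤ n) :
    summand n 1 ≤ ∑ k ∈ Finset.range n, summand n (k + 1) :=
  Finset.single_le_sum (f := fun k => summand n (k + 1))
    (fun k _ => summand_nonneg n (Nat.le_add_left 1 k)) (Finset.mem_range.mpr hn)

end R

theorem stmt_3 : ∀ n : ℕ, 1 ≤ n → 0 < R n := by
  intro n hn
  have hsplit : R n = ∑ k ∈ Finset.range n, R.summand n (k + 1) - 1 := by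
    rw [R.eq_sum_summand, Finset.sum_range_succ', R.summand_zero, sub_eq_add_neg]
  have hlower := R.summand_one_le_sum_succ n hn
  have hn' : (1 : ℚ) ≤ n := by exact_mod_cast hn
  rw [R.summand_one] at hlower
  nlinarith
end

section
/- For all integers k \ge 3, with b_n = (3 - 9/(2n)) + \sqrt{2}(2 - 3/n), one has (7k+13)b_k b_{k+1} b_{k+2} - (7k+15)b_k b_{k+1} + (k+1)b_{k+2} - (k+3)b_k b_{k+1} b_{k+2} b_{k+3} < 0. -/
/-!
With `c = 3 + 2√2 = (1 + √2)²` one has `b n = c (1 - 3/(2n))`, and `c² = 6c - 1`. Clearing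
denominators, the expression becomes `c N(c, k) / (16 k (k+1) (k+2))` with `N` cubic in `c`;
reducing `N` modulo `c² - 6c + 1` leaves `2 (2k+1)(33k-12) - 69 c (2k-3)(2k-1)`, which is negative
for `k ≥ 3` as soon as `c ≥ 3`.
-/

noncomputable def b (n : ℕ) : ℝ :=
  (3 - 9 / (2 * (n : ℝ))) + Real.sqrt 2 * (2 - 3 / (n : ℝ))

def defect (u : ℝ → ℝ) (x : ℝ) : ℝ :=
  (7 * x + 13) * u x * u (x + 1) * u (x + 2) - (7 * x + 15) * u x * u (x + 1)
    + (x + 1) * u (x + 2) - (x + 3) * u x * u (x + 1) * u (x + 2) * u (x + 3)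

lemma b_eq (n : ℕ) : b n = (3 + 2 * √2) * (1 - 3 / (2 * (n : ℝ))) := by
  rw [b]
  ring

lemma defect_eq_div (c x : ℝ) (hx : 0 < x) :
    defect (fun y => c * (1 - 3 / (2 * y))) x =
      c * (2 * c ^ 2 * (7 * x + 13) * (2 * x - 3) * (2 * x - 1) * (2 * x + 1)
        - 4 * c * (7 * x + 15) * (2 * x - 3) * (2 * x - 1) * (x + 2)
        + 8 * x * (x + 1) ^ 2 * (2 * x + 1)
        - c ^ 3 * (2 * x - 3) * (2 * x - 1) * (2 * x + 1) * (2 * x + 3))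
        / (16 * x * (x + 1) * (x + 2)) := by
  have h1 : x + 1 ≠ 0 := by positivity
  have h2 : x + 2 ≠ 0 := by positivity
  have h3 : x + 3 ≠ 0 := by positivity
  rw [defect]
  field_simp
  ring

lemma defect_eq {c : ℝ} (hc : c ^ 2 = 6 * c - 1) {x : ℝ} (hx : 0 < x) :
    defect (fun y => c * (1 - 3 / (2 * y))) x =
      c * (2 * (2 * x + 1) * (33 * x - 12) - 69 * c * (2 * x - 3) * (2 * x - 1))
        / (16 * x * (x + 1) * (x + 2)) := by
  rw [defect_eq_div c x hx]
  congr 2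
  linear_combination
    (2 * x - 3) * (2 * x - 1) * (2 * x + 1) * (2 * x + 8 - c * (2 * x + 3)) * hc

lemma defect_neg {c : ℝ} (hc : c ^ 2 = 6 * c - 1) (hc3 : 3 ≤ c) {x : ℝ} (hx : 3 ≤ x) :
    defect (fun y => c * (1 - 3 / (2 * y))) x < 0 := by
  rw [defect_eq hc (by linarith)]
  refine div_neg_of_neg_of_pos (mul_neg_of_pos_of_neg (by linarith) ?_) (by positivity)
  have hprod : 0 < (2 * x - 3) * (2 * x - 1) := by nlinarith
  nlinarith

theorem stmt_8 : ∀ k : ℕ, 3 ≤ k →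
    (7 * (k : ℝ) + 13) * b k * b (k + 1) * b (k + 2)
      - (7 * (k : ℝ) + 15) * b k * b (k + 1)
      + ((k : ℝ) + 1) * b (k + 2)
      - ((k : ℝ) + 3) * b k * b (k + 1) * b (k + 2) * b (k + 3) < 0 := by
  intro k hk
  have hc : (3 + 2 * √2) ^ 2 = 6 * (3 + 2 * √2) - 1 := by
    linear_combination 4 * Real.sq_sqrt (show (0 : ℝ) ≤ 2 by norm_num)
  have hc3 : 3 ≤ 3 + 2 * √2 := by linarith [Real.sqrt_nonneg 2]
  have hdefect := defect_neg hc hc3 (x := k) (by exact_mod_cast hk)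
  simp only [defect, b_eq] at hdefect ⊢
  push_cast
  exact hdefect
end

section
/- For all integers k \ge 4, with b_n = (3 - 9/(2n)) + \sqrt{2}(2 - 3/n), one has (7k+13)b_{k+1} b_{k+2} - (7k+15)b_{k+2} + (k+1) - (k+3)b_{k+1} b_{k+2}^2 > 0. -/
theorem two_mul_mul_b {n : ℕ} (hn : n ≠ 0) : 2 * n * b n = (3 + 2 * √2) * (2 * n - 3) := by
  unfold b
  field_simp
  ring

theorem three_add_two_sqrt_two_sq : (3 + 2 * √2) ^ 2 = 6 * (3 + 2 * √2) - 1 := by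
  nlinarith [Real.sq_sqrt (show (0 : ℝ) ≤ 2 by norm_num)]

theorem five_lt_three_add_two_sqrt_two : 5 < 3 + 2 * √2 := by
  have : 1 < √2 := by rw [Real.lt_sqrt] <;> norm_num
  linarith

theorem expr_mul_eq_of_sq_eq_six_mul_sub_one {c k x y : ℝ} (hc : c ^ 2 = 6 * c - 1)
    (hx : 2 * (k + 1) * x = c * (2 * (k + 1) - 3))
    (hy : 2 * (k + 2) * y = c * (2 * (k + 2) - 3)) :
    ((7 * k + 13) * x * y - (7 * k + 15) * y + (k + 1) - (k + 3) * x * y ^ 2)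
      * (8 * (k + 1) * (k + 2) ^ 2)
      = (198 * k ^ 2 - 555 * k - 327) * c - 30 * k ^ 2 + 108 * k + 66 := by
  have hcleared : ((7 * k + 13) * x * y - (7 * k + 15) * y + (k + 1) - (k + 3) * x * y ^ 2)
      * (8 * (k + 1) * (k + 2) ^ 2)
      = (7 * k + 13) * (2 * (k + 1) * x) * (2 * (k + 2) * y) * (2 * (k + 2))
        - (7 * k + 15) * (2 * (k + 2) * y) * (4 * (k + 1) * (k + 2))
        + 8 * (k + 1) ^ 2 * (k + 2) ^ 2
        - (k + 3) * (2 * (k + 1) * x) * (2 * (k + 2) * y) ^ 2 := by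
    ring
  rw [hcleared, hx, hy]
  -- `c³ - (35c - 6) = (c + 6) (c² - 6c + 1)`
  linear_combination (2 * (7 * k + 13) * (k + 2) * (2 * k - 1) * (2 * k + 1)
    - (k + 3) * (2 * k - 1) * (2 * k + 1) ^ 2 * (c + 6)) * hc

theorem quadratic_mul_add_pos {c k : ℝ} (hc : 5 < c) (hk : 4 ≤ k) :
    0 < (198 * k ^ 2 - 555 * k - 327) * c - 30 * k ^ 2 + 108 * k + 66 := by
  have hcoeff : 621 ≤ 198 * k ^ 2 - 555 * k - 327 := by nlinarith
  nlinarith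

theorem stmt_9 : ∀ k : ℕ, 4 ≤ k →
    (7 * (k : ℝ) + 13) * b (k + 1) * b (k + 2)
      - (7 * (k : ℝ) + 15) * b (k + 2)
      + ((k : ℝ) + 1)
      - ((k : ℝ) + 3) * b (k + 1) * b (k + 2) ^ 2 > 0 := by
  intro k hk
  have hk' : (4 : ℝ) ≤ k := by exact_mod_cast hk
  have hx := two_mul_mul_b (n := k + 1) (by omega)
  have hy := two_mul_mul_b (n := k + 2) (by omega)
  push_cast at hx hy
  have hD : (0 : ℝ) < 8 * (k + 1) * (k + 2) ^ 2 := by positivity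
  refine (pos_iff_pos_of_mul_pos ?_).mpr hD
  rw [expr_mul_eq_of_sq_eq_six_mul_sub_one three_add_two_sqrt_two_sq hx hy]
  exact quadratic_mul_add_pos five_lt_three_add_two_sqrt_two hk'
end

section
/- The ratio R_{n+1}/R_n converges to 3 + 2\sqrt{2} as n \to \infty. -/
/-!
Write `D n = ∑ₖ C(n,k) C(n+k,k)` for the central Delannoy numbers. One Zeilberger certificate
telescopes both `(n+2) D(n+2) = 3(2n+3) D(n+1) - (n+1) D n` and `(n+2) Δ²R n = 3 D(n+1) - D n`.
By the first, `D(n+1) / D n` follows the map `r ↦ 6 - 1/r` up to an `O(1/n)` error; that map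
contracts on `[3, ∞)` with fixed point `3 + 2√2`, so the ratio converges there, and by the second
`Δ²R` is positive with the same ratio limit. A ratio limit `L` with `|L| > 1` passes from the
differences of a sequence to the sequence itself, so it passes from `Δ²R` to `ΔR` and then to `R`.
-/

open Filter Finset Topology

section Binomial

variable {K : Type*} [Field K] [CharZero K]

theorem Nat.cast_choose_eq_mul_succ_choose_div (m k : ℕ) :
    (m.choose k : K) = ((m : K) + 1 - k) * ((m + 1).choose k : K) / ((m : K) + 1) := by
  rw [eq_div_iff m.cast_add_one_ne_zero]
  rcases le_or_gt k (m + 1) with hk | hk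
  · have h := congrArg (Nat.cast : ℕ → K) (Nat.choose_mul_succ_eq m k)
    push_cast [Nat.cast_sub hk] at h
    linear_combination h
  · simp [Nat.choose_eq_zero_of_lt hk, Nat.choose_eq_zero_of_lt (by omega : m < k)]

theorem Nat.cast_choose_succ_right_eq_mul_div (m k : ℕ) :
    (m.choose (k + 1) : K) = ((m : K) - k) * (m.choose k : K) / ((k : K) + 1) := by
  rw [eq_div_iff k.cast_add_one_ne_zero]
  rcases le_or_gt k m with hk | hk
  · have h := congrArg (Nat.cast : ℕ → K) (Nat.choose_succ_right_eq m k)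
    push_cast [Nat.cast_sub hk] at h
    linear_combination h
  · simp [Nat.choose_eq_zero_of_lt hk, Nat.choose_eq_zero_of_lt (by omega : m < k + 1)]

end Binomial

theorem le_pow_mul_add_of_le_mul_add {x : ℕ → ℝ} {a b B : ℝ} {N : ℕ} (ha : 0 ≤ a) (hB₀ : 0 ≤ B)
    (hB : a * B + b ≤ B) (h : ∀ n ≥ N, x (n + 1) ≤ a * x n + b) (k : ℕ) :
    x (N + k) ≤ a ^ k * x N + B := by
  induction k with
  | zero => simpa using hB₀
  | succ k ih =>
    calc x (N + (k + 1)) ≤ a * x (N + k) + b := h (N + k) (Nat.le_add_right N k)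
      _ ≤ a * (a ^ k * x N + B) + b := by gcongr
      _ ≤ a ^ (k + 1) * x N + B := by rw [pow_succ']; linarith

theorem tendsto_zero_of_le_mul_add {x c : ℕ → ℝ} {a : ℝ} (ha₀ : 0 ≤ a) (ha₁ : a < 1)
    (hx : ∀ n, 0 ≤ x n) (hc : Tendsto c atTop (𝓝 0))
    (h : ∀ᶠ n in atTop, x (n + 1) ≤ a * x n + c n) : Tendsto x atTop (𝓝 0) := by
  refine tendsto_order.2 ⟨fun b hb => .of_forall fun n => hb.trans_le (hx n), fun ε hε => ?_⟩
  have hb : 0 < (1 - a) * ε / 2 := by have := sub_pos.2 ha₁; positivity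
  obtain ⟨N, hN⟩ := eventually_atTop.1 (h.and (hc.eventually (gt_mem_nhds hb)))
  have hbound : ∀ k, x (N + k) ≤ a ^ k * x N + ε / 2 :=
    le_pow_mul_add_of_le_mul_add (b := (1 - a) * ε / 2) ha₀ (by positivity) (by linarith)
      fun n hn => (hN n hn).1.trans (by linarith [(hN n hn).2])
  have hpow : Tendsto (fun k => a ^ k * x N) atTop (𝓝 0) := by
    simpa using (tendsto_pow_atTop_nhds_zero_of_lt_one ha₀ ha₁).mul_const (x N)
  obtain ⟨K, hK⟩ := eventually_atTop.1 (hpow.eventually (gt_mem_nhds (half_pos hε)))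
  filter_upwards [eventually_ge_atTop (N + K)] with n hn
  obtain ⟨k, rfl⟩ := Nat.exists_eq_add_of_le (le_trans (Nat.le_add_right N K) hn)
  linarith [hbound k, hK k (by omega)]

theorem tendsto_of_abs_sub_le_mul_add {y c : ℕ → ℝ} {a l : ℝ} (ha₀ : 0 ≤ a) (ha₁ : a < 1)
    (hc : Tendsto c atTop (𝓝 0)) (h : ∀ᶠ n in atTop, |y (n + 1) - l| ≤ a * |y n - l| + c n) :
    Tendsto y atTop (𝓝 l) := by
  rw [tendsto_iff_norm_sub_tendsto_zero]
  simp only [Real.norm_eq_abs]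
  exact tendsto_zero_of_le_mul_add ha₀ ha₁ (fun n => abs_nonneg _) hc h

theorem tendsto_of_succ_eq_sub_inv_add {r e : ℕ → ℝ} {c l m : ℝ} (hm : 1 < m) (hr : ∀ n, m ≤ r n)
    (hl : m ≤ l) (hfix : l = c - l⁻¹) (he : Tendsto e atTop (𝓝 0))
    (hrec : ∀ n, r (n + 1) = c - (r n)⁻¹ + e n) : Tendsto r atTop (𝓝 l) := by
  have hm₀ : 0 < m := by linarith
  refine tendsto_of_abs_sub_le_mul_add (a := (m ^ 2)⁻¹) (by positivity)
    (inv_lt_one_of_one_lt₀ (one_lt_pow₀ hm two_ne_zero)) (by simpa using he.abs)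
    (.of_forall fun n => ?_)
  have hr₀ : 0 < r n := hm₀.trans_le (hr n)
  have hl₀ : 0 < l := hm₀.trans_le hl
  have hrl : 0 < r n * l := mul_pos hr₀ hl₀
  have hdiff : r (n + 1) - l = (r n - l) / (r n * l) + e n := by
    rw [hrec n, show c = l + l⁻¹ by linarith]
    field_simp [hr₀.ne', hl₀.ne']
    ring
  calc |r (n + 1) - l| ≤ |r n - l| / (r n * l) + |e n| := by
        rw [hdiff]
        exact (abs_add_le _ _).trans_eq (by rw [abs_div, abs_of_pos hrl])
    _ ≤ (m ^ 2)⁻¹ * |r n - l| + |e n| := by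
        rw [div_eq_inv_mul]
        gcongr
        nlinarith [hr n]

theorem tendsto_of_succ_eq_add_one_mul {y ρ : ℕ → ℝ} {p q : ℝ} (hp : |p| < 1)
    (hq : q = (q + 1) * p) (hρ : Tendsto ρ atTop (𝓝 p)) (hy : ∀ n, y (n + 1) = (y n + 1) * ρ n) :
    Tendsto y atTop (𝓝 q) := by
  have hρa : ∀ᶠ n in atTop, |ρ n| < (1 + |p|) / 2 :=
    hρ.abs.eventually (gt_mem_nhds (by linarith))
  refine tendsto_of_abs_sub_le_mul_add (a := (1 + |p|) / 2) (c := fun n => |ρ n - p| * |q + 1|)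
    (by positivity) (by linarith) ?_ ?_
  · simpa using ((hρ.sub_const p).abs).mul_const |q + 1|
  · filter_upwards [hρa] with n hn
    have : y (n + 1) - q = ρ n * (y n - q) + (ρ n - p) * (q + 1) := by
      rw [hy n]; linear_combination -hq
    rw [this]
    calc |ρ n * (y n - q) + (ρ n - p) * (q + 1)| ≤ |ρ n| * |y n - q| + |ρ n - p| * |q + 1| :=
          (abs_add_le _ _).trans_eq (by rw [abs_mul, abs_mul])
      _ ≤ (1 + |p|) / 2 * |y n - q| + |ρ n - p| * |q + 1| := by gcongr

theorem tendsto_succ_div_of_tendsto_sub_div_sub {S : ℕ → ℝ} {L : ℝ} (hL : 1 < |L|)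
    (hS : ∀ n, S (n + 1) - S n ≠ 0)
    (h : Tendsto (fun n => (S (n + 2) - S (n + 1)) / (S (n + 1) - S n)) atTop (𝓝 L)) :
    Tendsto (fun n => S (n + 1) / S n) atTop (𝓝 L) := by
  have hL₀ : L ≠ 0 := by rintro rfl; norm_num at hL
  have hL₁ : L - 1 ≠ 0 := by rintro h; rw [sub_eq_zero.1 h] at hL; norm_num at hL
  have hρ : Tendsto (fun n => (S (n + 1) - S n) / (S (n + 2) - S (n + 1))) atTop (𝓝 L⁻¹) := by
    simpa only [inv_div] using h.inv₀ hL₀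
  have hy : Tendsto (fun n => S n / (S (n + 1) - S n)) atTop (𝓝 (L - 1)⁻¹) :=
    tendsto_of_succ_eq_add_one_mul (by rw [abs_inv]; exact inv_lt_one_of_one_lt₀ hL)
      (by field_simp; ring) hρ (fun n => by field_simp [hS n, hS (n + 1)]; ring)
  have hlim : 1 + ((L - 1)⁻¹)⁻¹ = L := by rw [inv_inv]; ring
  rw [← hlim]
  refine ((hy.inv₀ (inv_ne_zero hL₁)).const_add 1).congr' ?_
  filter_upwards [hy.eventually_ne (inv_ne_zero hL₁)] with n hn
  have : S n ≠ 0 := by rintro h; simp [h] at hn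
  field_simp [hS n]
  ring

def delannoyTerm (n k : ℕ) : ℚ := n.choose k * (n + k).choose k

theorem delannoyTerm_eq_zero_of_lt {n k : ℕ} (h : n < k) : delannoyTerm n k = 0 := by
  simp [delannoyTerm, Nat.choose_eq_zero_of_lt h]

theorem delannoyTerm_eq_mul_succ (n k : ℕ) :
    delannoyTerm n k = ((n : ℚ) + 1 - k) / ((n : ℚ) + k + 1) * delannoyTerm (n + 1) k := by
  have hnk : ((n : ℚ) + k + 1) ≠ 0 := by positivity
  rw [delannoyTerm, delannoyTerm, Nat.cast_choose_eq_mul_succ_choose_div n k,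
    Nat.cast_choose_eq_mul_succ_choose_div (n + k) k, show n + 1 + k = n + k + 1 by omega]
  push_cast
  field_simp
  ring

theorem delannoyTerm_succ_right (n k : ℕ) :
    delannoyTerm n (k + 1)
      = ((n : ℚ) - k) * ((n : ℚ) + k + 1) / ((k : ℚ) + 1) ^ 2 * delannoyTerm n k := by
  rw [delannoyTerm, delannoyTerm, Nat.cast_choose_succ_right_eq_mul_div n k,
    show n + (k + 1) = n + k + 1 by omega, Nat.cast_choose_succ_right_eq_mul_div (n + k + 1) k,
    Nat.cast_choose_eq_mul_succ_choose_div (n + k) k]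
  push_cast
  field_simp

/-- Zeilberger's certificate for the Delannoy summand: both recurrences below hold summandwise up to
`delannoyCert n k - delannoyCert n (k + 1)`. -/
def delannoyCert (n j : ℕ) : ℚ :=
  (j : ℚ) ^ 2 / (((n : ℚ) + j + 1) * ((n : ℚ) + j + 2)) * delannoyTerm (n + 2) j

theorem delannoyTerm_recurrence (n k : ℕ) :
    ((n : ℚ) + 2) * delannoyTerm (n + 2) k - 3 * (2 * (n : ℚ) + 3) * delannoyTerm (n + 1) k
      + ((n : ℚ) + 1) * delannoyTerm n k
      = 2 * (2 * (n : ℚ) + 3) * (delannoyCert n k - delannoyCert n (k + 1)) := by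
  rw [delannoyCert, delannoyCert, delannoyTerm_succ_right, delannoyTerm_eq_mul_succ n,
    delannoyTerm_eq_mul_succ (n + 1)]
  push_cast
  field_simp
  ring

theorem two_mul_natCast_sub_one_ne_zero (k : ℕ) : 2 * (k : ℚ) - 1 ≠ 0 := by
  intro h
  have : (2 * k : ℚ) = (1 : ℕ) := by push_cast; linarith
  norm_cast at this
  omega

theorem delannoyTerm_div_recurrence (n k : ℕ) :
    ((n : ℚ) + 2) * (delannoyTerm (n + 2) k / (2 * k - 1)
        - 2 * (delannoyTerm (n + 1) k / (2 * k - 1)) + delannoyTerm n k / (2 * k - 1))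
      - 3 * delannoyTerm (n + 1) k + delannoyTerm n k
      = 2 * (delannoyCert n k - delannoyCert n (k + 1)) := by
  have := two_mul_natCast_sub_one_ne_zero k
  rw [delannoyCert, delannoyCert, delannoyTerm_succ_right, delannoyTerm_eq_mul_succ n,
    delannoyTerm_eq_mul_succ (n + 1)]
  push_cast
  field_simp
  ring

theorem sum_range_delannoyCert_sub (n : ℕ) :
    ∑ k ∈ range (n + 3), (delannoyCert n k - delannoyCert n (k + 1)) = 0 := by
  rw [sum_range_sub', delannoyCert, delannoyCert,
    delannoyTerm_eq_zero_of_lt (by omega : n + 2 < n + 3)]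
  simp

def centralDelannoy (n : ℕ) : ℚ := ∑ k ∈ range (n + 1), delannoyTerm n k

theorem centralDelannoy_eq_sum_range {n m : ℕ} (h : n + 1 ≤ m) :
    centralDelannoy n = ∑ k ∈ range m, delannoyTerm n k :=
  (eventually_constant_sum (fun _ hk => delannoyTerm_eq_zero_of_lt hk) h).symm

theorem R_eq_sum_range {n m : ℕ} (h : n + 1 ≤ m) :
    R n = ∑ k ∈ range m, delannoyTerm n k / (2 * k - 1) := by
  simp only [R, ← div_eq_mul_one_div]
  exact (eventually_constant_sum (u := fun k => delannoyTerm n k / (2 * k - 1))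
    (fun _ hk => by rw [delannoyTerm_eq_zero_of_lt hk, zero_div]) h).symm

theorem centralDelannoy_recurrence (n : ℕ) :
    ((n : ℚ) + 2) * centralDelannoy (n + 2)
      = 3 * (2 * (n : ℚ) + 3) * centralDelannoy (n + 1) - ((n : ℚ) + 1) * centralDelannoy n := by
  have h := sum_congr rfl (fun k (_ : k ∈ range (n + 3)) => delannoyTerm_recurrence n k)
  rw [← mul_sum, sum_range_delannoyCert_sub, mul_zero] at h
  simp only [sum_add_distrib, sum_sub_distrib, ← mul_sum] at h
  rw [centralDelannoy_eq_sum_range (m := n + 3) (by omega),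
    centralDelannoy_eq_sum_range (m := n + 3) (by omega),
    centralDelannoy_eq_sum_range (m := n + 3) (by omega)]
  linarith

theorem R_second_difference (n : ℕ) :
    R (n + 2) - R (n + 1) - (R (n + 1) - R n)
      = (3 * centralDelannoy (n + 1) - centralDelannoy n) / ((n : ℚ) + 2) := by
  have h := sum_congr rfl (fun k (_ : k ∈ range (n + 3)) => delannoyTerm_div_recurrence n k)
  rw [← mul_sum, sum_range_delannoyCert_sub, mul_zero] at h
  simp only [sum_add_distrib, sum_sub_distrib, ← mul_sum] at h
  rw [eq_div_iff (by positivity), centralDelannoy_eq_sum_range (m := n + 3) (by omega),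
    centralDelannoy_eq_sum_range (m := n + 3) (by omega), R_eq_sum_range (m := n + 3) (by omega),
    R_eq_sum_range (m := n + 3) (by omega), R_eq_sum_range (m := n + 3) (by omega)]
  linarith

theorem one_le_centralDelannoy (n : ℕ) : 1 ≤ centralDelannoy n :=
  calc 1 = delannoyTerm n 0 := by simp [delannoyTerm]
    _ ≤ centralDelannoy n :=
      single_le_sum (fun k _ => by unfold delannoyTerm; positivity) (by simp)

theorem centralDelannoy_pos (n : ℕ) : 0 < centralDelannoy n :=
  zero_lt_one.trans_le (one_le_centralDelannoy n)

theorem three_mul_centralDelannoy_le (n : ℕ) : 3 * centralDelannoy n ≤ centralDelannoy (n + 1) := by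
  induction n with
  | zero => norm_num [centralDelannoy, delannoyTerm, sum_range_succ]
  | succ n ih =>
    have hrec := centralDelannoy_recurrence n
    have hpos := centralDelannoy_pos n
    have hn : (0 : ℚ) ≤ n := n.cast_nonneg
    nlinarith [mul_le_mul_of_nonneg_left ih (by positivity : (0 : ℚ) ≤ n + 1)]

theorem three_mul_centralDelannoy_sub_pos (n : ℕ) :
    0 < 3 * centralDelannoy (n + 1) - centralDelannoy n := by
  linarith [three_mul_centralDelannoy_le n, centralDelannoy_pos n]

theorem three_add_two_mul_sqrt_two_eq : (3 + 2 * √2 : ℝ) = 6 - (3 + 2 * √2)⁻¹ := by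
  have h := Real.sq_sqrt (zero_le_two (α := ℝ))
  have : (0 : ℝ) < 3 + 2 * √2 := by positivity
  field_simp
  linear_combination 4 * h

theorem tendsto_centralDelannoy_ratio :
    Tendsto (fun n => (centralDelannoy (n + 1) : ℝ) / centralDelannoy n) atTop
      (𝓝 (3 + 2 * √2)) := by
  set r : ℕ → ℝ := fun n => (centralDelannoy (n + 1) : ℝ) / centralDelannoy n
  have hD (n : ℕ) : (0 : ℝ) < centralDelannoy n := Rat.cast_pos.2 (centralDelannoy_pos n)
  have hr (n : ℕ) : 3 ≤ r n := by
    rw [le_div_iff₀ (hD n)]; exact_mod_cast three_mul_centralDelannoy_le n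
  refine tendsto_of_succ_eq_sub_inv_add (c := 6) (e := fun n => ((r n)⁻¹ - 3) / (n + 2))
    (by norm_num) hr (by linarith [Real.sqrt_nonneg 2]) three_add_two_mul_sqrt_two_eq ?_ fun n => ?_
  · refine squeeze_zero_norm (fun n => ?_)
      (by simpa using (tendsto_one_div_add_atTop_nhds_zero_nat (𝕜 := ℝ)).const_mul 3)
    have h0 : 0 < (r n)⁻¹ := inv_pos.2 (by linarith [hr n])
    have h1 : (r n)⁻¹ ≤ 3⁻¹ := inv_anti₀ (by norm_num) (hr n)
    rw [Real.norm_eq_abs, abs_div, abs_of_nonpos (by linarith), abs_of_pos (by positivity)]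
    calc -((r n)⁻¹ - 3) / ((n : ℝ) + 2) ≤ 3 / ((n : ℝ) + 1) := by
          gcongr
          · linarith
          · linarith
      _ = 3 * ((n : ℝ) + 1)⁻¹ := div_eq_mul_inv _ _
  · have h : ((n : ℝ) + 2) * centralDelannoy (n + 2)
        = 3 * (2 * (n : ℝ) + 3) * centralDelannoy (n + 1) - ((n : ℝ) + 1) * centralDelannoy n := by
      exact_mod_cast centralDelannoy_recurrence n
    have := hD n; have := hD (n + 1)
    simp only [r]
    field_simp
    linear_combination h

theorem R_second_difference_pos (n : ℕ) : 0 < R (n + 2) - R (n + 1) - (R (n + 1) - R n) := by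
  rw [R_second_difference]
  exact div_pos (three_mul_centralDelannoy_sub_pos n) (by positivity)

theorem R_succ_sub_pos (n : ℕ) : 0 < R (n + 1) - R n := by
  induction n with
  | zero => norm_num [R, sum_range_succ]
  | succ n ih => linarith [R_second_difference_pos n]

theorem tendsto_R_second_difference_ratio :
    Tendsto (fun n => ((R (n + 3) : ℝ) - R (n + 2) - (R (n + 2) - R (n + 1)))
      / (R (n + 2) - R (n + 1) - (R (n + 1) - R n))) atTop (𝓝 (3 + 2 * √2)) := by
  have hR (n : ℕ) : (R (n + 2) : ℝ) - R (n + 1) - (R (n + 1) - R n)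
      = (3 * centralDelannoy (n + 1) - centralDelannoy n) / ((n : ℝ) + 2) := by
    exact_mod_cast R_second_difference n
  have hr := tendsto_centralDelannoy_ratio
  have hl : 3 * (3 + 2 * √2) - 1 ≠ 0 := by nlinarith [Real.sqrt_nonneg 2]
  have hn : Tendsto (fun n : ℕ => ((n : ℝ) + 2) / ((n : ℝ) + 3)) atTop (𝓝 1) := by
    simpa [add_comm] using tendsto_add_mul_div_add_mul_atTop_nhds (2 : ℝ) 3 1 one_ne_zero
  -- with `r n = D (n+1) / D n`: `Δ²R (n+1) / Δ²R n = (n+2)/(n+3) · r n (3 r (n+1) - 1) / (3 r n - 1)`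
  have hlim := hn.mul ((hr.mul (((hr.comp (tendsto_add_atTop_nat 1)).const_mul 3).sub_const 1)).div
    ((hr.const_mul 3).sub_const 1) hl)
  rw [one_mul, mul_div_assoc, div_self hl, mul_one] at hlim
  refine hlim.congr fun n => ?_
  have hD (k : ℕ) : (0 : ℝ) < centralDelannoy k := Rat.cast_pos.2 (centralDelannoy_pos k)
  have hgap (k : ℕ) : (0 : ℝ) < 3 * centralDelannoy (k + 1) - centralDelannoy k := by
    exact_mod_cast three_mul_centralDelannoy_sub_pos k
  have := hD n; have := hD (n + 1); have := hgap n; have := hgap (n + 1)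
  rw [hR n, hR (n + 1)]
  simp only [Pi.div_apply, Function.comp_apply]
  push_cast
  field_simp
  ring

theorem stmt_11 :
    Filter.Tendsto (fun n : ℕ => (R (n + 1) : ℝ) / (R n : ℝ)) Filter.atTop
      (nhds (3 + 2 * Real.sqrt 2)) := by
  have hL : 1 < |3 + 2 * √2| := by
    rw [abs_of_pos (by positivity)]; linarith [Real.sqrt_nonneg 2]
  have hΔR : Tendsto (fun n => ((R (n + 2) : ℝ) - R (n + 1)) / (R (n + 1) - R n)) atTop
      (𝓝 (3 + 2 * √2)) :=
    tendsto_succ_div_of_tendsto_sub_div_sub (S := fun n => (R (n + 1) : ℝ) - R n) hL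
      (fun n => by exact_mod_cast (R_second_difference_pos n).ne')
      tendsto_R_second_difference_ratio
  exact tendsto_succ_div_of_tendsto_sub_div_sub (S := fun n => (R n : ℝ)) hL
    (fun n => by exact_mod_cast (R_succ_sub_pos n).ne') hΔR
end

section
/- For all integers n \ge 11, R_{n+1}/R_n > 5. -/
section ChooseRatios

variable {K : Type*} [Field K] [CharZero K]

theorem Nat.cast_choose_eq_mul_cast_choose_succ (m k : ℕ) :
    (m.choose k : K) = (m + 1 - k) / (m + 1) * ((m + 1).choose k : K) := by
  rw [div_mul_eq_mul_div, eq_div_iff (Nat.cast_add_one_ne_zero m)]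
  rcases le_or_gt k (m + 1) with hk | hk
  · have h := congrArg (Nat.cast : ℕ → K) (Nat.choose_mul_succ_eq m k)
    push_cast [Nat.cast_sub hk] at h
    linear_combination h
  · simp [Nat.choose_eq_zero_of_lt hk, Nat.choose_eq_zero_of_lt (show m < k by omega)]

theorem Nat.cast_choose_add_succ (n k : ℕ) :
    ((n + k + 1).choose k : K) = (n + k + 1) / (n + 1) * ((n + k).choose k : K) := by
  have h := Nat.cast_choose_eq_mul_cast_choose_succ (K := K) (n + k) k
  push_cast at h
  have hn : (n + 1 : K) ≠ 0 := Nat.cast_add_one_ne_zero n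
  have hnk : (n + k + 1 : K) ≠ 0 := by exact_mod_cast Nat.succ_ne_zero (n + k)
  rw [h]
  field_simp
  ring

theorem Nat.cast_choose_succ_right (m k : ℕ) :
    (m.choose (k + 1) : K) = (m - k) / (k + 1) * (m.choose k : K) := by
  rw [div_mul_eq_mul_div, eq_div_iff (Nat.cast_add_one_ne_zero k)]
  rcases le_or_gt k m with hk | hk
  · have h := congrArg (Nat.cast : ℕ → K) (Nat.choose_succ_right_eq m k)
    push_cast [Nat.cast_sub hk] at h
    linear_combination h
  · simp [Nat.choose_eq_zero_of_lt hk, Nat.choose_eq_zero_of_lt (show m < k + 1 by omega)]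

theorem Nat.cast_add_succ_choose_succ (n k : ℕ) :
    ((n + k + 1).choose (k + 1) : K) = (n + k + 1) / (k + 1) * ((n + k).choose k : K) := by
  have h := congrArg (Nat.cast : ℕ → K) (Nat.add_one_mul_choose_eq (n + k) k)
  push_cast at h
  rw [div_mul_eq_mul_div, eq_div_iff (Nat.cast_add_one_ne_zero k)]
  linear_combination -h

end ChooseRatios

noncomputable def rTerm (n k : ℕ) : ℚ :=
  (n.choose k : ℚ) * ((n + k).choose k : ℚ) * (1 / (2 * (k : ℚ) - 1))

noncomputable def rCert (n k : ℕ) : ℚ :=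
  -4 * (k : ℚ) ^ 2 * ((n + 3).choose k : ℚ) * ((n + k).choose k : ℚ) / ((n + 1) * (n + 3))

theorem rTerm_wz (n k : ℕ) :
    (n + 3) * rTerm (n + 3) k - (7 * n + 13) * rTerm (n + 2) k + (7 * n + 15) * rTerm (n + 1) k
      - (n + 1) * rTerm n k = rCert n (k + 1) - rCert n k := by
  have c2 : ((n + 2).choose k : ℚ) = (n + 3 - k) / (n + 3) * ((n + 3).choose k : ℚ) := by
    rw [Nat.cast_choose_eq_mul_cast_choose_succ]; push_cast; ring_nf
  have c1 : ((n + 1).choose k : ℚ) = (n + 2 - k) / (n + 2) * ((n + 2).choose k : ℚ) := by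
    rw [Nat.cast_choose_eq_mul_cast_choose_succ]; push_cast; ring_nf
  have c0 : (n.choose k : ℚ) = (n + 1 - k) / (n + 1) * ((n + 1).choose k : ℚ) :=
    Nat.cast_choose_eq_mul_cast_choose_succ n k
  have d1 : ((n + 1 + k).choose k : ℚ) = (n + k + 1) / (n + 1) * ((n + k).choose k : ℚ) := by
    rw [← Nat.cast_choose_add_succ]; ring_nf
  have d2 : ((n + 2 + k).choose k : ℚ) = (n + k + 2) / (n + 2) * ((n + 1 + k).choose k : ℚ) := by
    rw [show n + 2 + k = n + 1 + k + 1 by omega, Nat.cast_choose_add_succ]; push_cast; ring_nf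
  have d3 : ((n + 3 + k).choose k : ℚ) = (n + k + 3) / (n + 3) * ((n + 2 + k).choose k : ℚ) := by
    rw [show n + 3 + k = n + 2 + k + 1 by omega, Nat.cast_choose_add_succ]; push_cast; ring_nf
  have e1 : ((n + 3).choose (k + 1) : ℚ) = (n + 3 - k) / (k + 1) * ((n + 3).choose k : ℚ) := by
    rw [Nat.cast_choose_succ_right]; push_cast; ring_nf
  have e2 : ((n + (k + 1)).choose (k + 1) : ℚ) = (n + k + 1) / (k + 1) * ((n + k).choose k : ℚ) := by
    rw [← Nat.cast_add_succ_choose_succ]; ring_nf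
  have hk : (2 * k - 1 : ℚ) ≠ 0 :=
    sub_ne_zero.2 (by exact_mod_cast (show 2 * k ≠ 1 by omega))
  simp only [rTerm, rCert]
  rw [c0, c1, c2, d3, d2, d1, e1, e2]
  push_cast
  -- `field_simp` does not clear the denominator `2 * k - 1` unless it is an atom.
  generalize hd : 2 * (k : ℚ) - 1 = d at hk ⊢
  field_simp
  rw [← hd]
  ring

open Finset

theorem R_eq_sum_rTerm {n N : ℕ} (h : n < N) : R n = ∑ k ∈ range N, rTerm n k := by
  refine sum_subset (range_subset_range.2 h) fun k _ hk => ?_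
  simp [Nat.choose_eq_zero_of_lt (show n < k by simpa using hk)]

theorem R_recurrence (n : ℕ) :
    (n + 3) * R (n + 3) = (7 * n + 13) * R (n + 2) - (7 * n + 15) * R (n + 1) + (n + 1) * R n := by
  have htele : ∑ k ∈ range (n + 4), (rCert n (k + 1) - rCert n k) = 0 := by
    rw [sum_range_sub]
    simp [rCert]
  simp only [← rTerm_wz, sum_sub_distrib, sum_add_distrib, ← mul_sum] at htele
  rw [R_eq_sum_rTerm (N := n + 4) (by omega), R_eq_sum_rTerm (N := n + 4) (by omega),
    R_eq_sum_rTerm (N := n + 4) (by omega), R_eq_sum_rTerm (N := n + 4) (by omega)]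
  linear_combination htele

section RatioBand

variable {K : Type*} [Field K] [LinearOrder K] [IsStrictOrderedRing K]

def InRatioBand (u : ℕ → K) (n : ℕ) : Prop :=
  0 < u n ∧ 5 * u n < u (n + 1) ∧ u (n + 1) < 6 * u n

theorem InRatioBand.add_two {u : ℕ → K} {n : ℕ} (hn : 9 ≤ n)
    (hrec : (n + 3) * u (n + 3) =
      (7 * n + 13) * u (n + 2) - (7 * n + 15) * u (n + 1) + (n + 1) * u n)
    (h₀ : InRatioBand u n) (h₁ : InRatioBand u (n + 1)) : InRatioBand u (n + 2) := by
  obtain ⟨p₀, l₀, u₀⟩ := h₀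
  obtain ⟨p₁, l₁, u₁⟩ := h₁
  have hn' : (9 : K) ≤ n := by exact_mod_cast hn
  refine ⟨by linarith, ?_, ?_⟩
  -- `(n + 3) (u (n + 3) - 5 u (n + 2)) > (3n - 25) u (n + 1) + (n + 1) u n`, positive once `n ≥ 9`.
  · nlinarith
  · nlinarith

theorem inRatioBand_of_le {u : ℕ → K}
    (hrec : ∀ n : ℕ, (n + 3) * u (n + 3) =
      (7 * n + 13) * u (n + 2) - (7 * n + 15) * u (n + 1) + (n + 1) * u n)
    {N : ℕ} (hN : 9 ≤ N) (h₀ : InRatioBand u N) (h₁ : InRatioBand u (N + 1)) :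
    ∀ n, N ≤ n → InRatioBand u n := by
  have hpair : ∀ m, InRatioBand u (N + m) ∧ InRatioBand u (N + m + 1) := by
    intro m
    induction m with
    | zero => exact ⟨h₀, h₁⟩
    | succ m ih => exact ⟨ih.2, ih.1.add_two (hN.trans (Nat.le_add_right N m)) (hrec _) ih.2⟩
  intro n hn
  obtain ⟨m, rfl⟩ := Nat.exists_eq_add_of_le hn
  exact (hpair m).1

end RatioBand

theorem stmt_19 : ∀ n : ℕ, 11 ≤ n → R (n + 1) / R n > 5 := by
  have h₁₁ : R 11 = 3242377 := by
    norm_num [R, sum_range_succ, Nat.choose_eq_factorial_div_factorial, Nat.factorial]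
  have h₁₂ : R 12 = 16421831 := by
    norm_num [R, sum_range_succ, Nat.choose_eq_factorial_div_factorial, Nat.factorial]
  have h₁₃ : R 13 = 84196761 := by
    norm_num [R, sum_range_succ, Nat.choose_eq_factorial_div_factorial, Nat.factorial]
  intro n hn
  obtain ⟨hpos, hlow, -⟩ := inRatioBand_of_le R_recurrence (by norm_num)
    (by norm_num [InRatioBand, h₁₁, h₁₂]) (by norm_num [InRatioBand, h₁₂, h₁₃]) n hn
  rw [gt_iff_lt, lt_div_iff₀ hpos]
  linarith
end
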